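/- arXiv:2601.13482 — 3 statements merged into one kernel-verified Lean document; each statement's English description precedes it below -/
import Mathlib

section
/- Let m and n be positive integers with m odd. Then the element [m+n−1]·(∏_{j=0}^{n−2}[m+1+2j])/[n]! of ℚ(q) is a Laurent polynomial with integer coefficients, i.e. it lies in the image of ℤ[q,q⁻¹] in ℚ(q) (the product is over 0 ≤ j ≤ n−2 and is empty when n = 1). -/
open scoped BigOperators

/-- The generator `q` of the field of rational functions `ℚ(q)`. -/
noncomputable def q : RatFunc ℚ := RatFunc.X

/-- The balanced quantum integer `[a] = (q^a - q^(-a))/(q - q⁻¹)`. -/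
noncomputable def qint (a : ℤ) : RatFunc ℚ := (q ^ a - q ^ (-a)) / (q - q⁻¹)

/-- The quantum factorial `[k]! = [1][2]⋯[k]`. -/
noncomputable def qfact (k : ℕ) : RatFunc ℚ := ∏ i ∈ Finset.range k, qint ((i : ℤ) + 1)

/-- The balanced quantum binomial `qbinom a b = [a][a-1]⋯[a-b+1]/[b]!` for `b ≥ 0`,
and `0` for `b < 0`. -/
noncomputable def qbinom (a b : ℤ) : RatFunc ℚ :=
  if b < 0 then 0
  else (∏ i ∈ Finset.range b.toNat, qint (a - (i : ℤ))) / qfact b.toNat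

/-- `f` lies in the image of `ℤ[q, q⁻¹]` in `ℚ(q)`. -/
def IsIntLaurent (f : RatFunc ℚ) : Prop :=
  ∃ (p : Polynomial ℤ) (k : ℕ), f = Polynomial.aeval q p * q ^ (-(k : ℤ))

/-!
Write `m = 2c - 1` and `n = N + 1`. Since `[2k] = [k](q^k + q^(-k))`, the product
`∏ [m + 1 + 2j]` is `[c][c+1]⋯[c+N-1]` times a Laurent polynomial, and the addition rule
`[x + y] = q^y [x] + q^(-x) [y]` splits `[m + n - 1] = [(c + N) + (c - 1)]` into two terms,
each of which extends `[c]⋯[c+N-1]` to `N + 1` consecutive q-integers. Divided by `[N+1]!`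
these are the q-binomials `qbinom (c + N) (N + 1)` and `qbinom (c + N - 1) (N + 1)`, which are
Laurent polynomials by the q-Pascal rule, run upwards and downwards in the top argument.
-/

open Finset

lemma q_ne_zero : q ≠ 0 := RatFunc.X_ne_zero

lemma q_pow_ne_one {n : ℕ} (hn : n ≠ 0) : q ^ n ≠ 1 := fun h =>
  RatFunc.transcendental_X ⟨Polynomial.X ^ n - Polynomial.C 1,
    Polynomial.X_pow_sub_C_ne_zero (Nat.pos_of_ne_zero hn) (1 : ℚ),
    by simpa [q, sub_eq_zero] using h⟩

lemma q_sub_inv_ne_zero : q - q⁻¹ ≠ 0 := by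
  refine sub_ne_zero.2 fun h => q_pow_ne_one two_ne_zero ?_
  rw [sq]
  nth_rw 1 [h]
  exact inv_mul_cancel₀ q_ne_zero

lemma qint_natCast_ne_zero {n : ℕ} (hn : n ≠ 0) : qint n ≠ 0 := by
  rw [qint, div_ne_zero_iff, sub_ne_zero]
  refine ⟨fun h => q_pow_ne_one (Nat.mul_ne_zero two_ne_zero hn) ?_, q_sub_inv_ne_zero⟩
  rw [← zpow_natCast, Nat.cast_mul, Nat.cast_ofNat, two_mul, zpow_add₀ q_ne_zero]
  nth_rw 1 [h]
  rw [← zpow_add₀ q_ne_zero, neg_add_cancel, zpow_zero]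

lemma qint_one : qint 1 = 1 := by
  rw [qint, zpow_one, zpow_neg_one, div_self q_sub_inv_ne_zero]

lemma qint_add (x y : ℤ) : qint (x + y) = q ^ y * qint x + q ^ (-x) * qint y := by
  simp only [qint, ← mul_div_assoc, ← add_div, neg_add, zpow_add₀ q_ne_zero]
  ring

lemma qint_two_mul (a : ℤ) : qint (2 * a) = qint a * (q ^ a + q ^ (-a)) := by
  rw [two_mul, qint_add]
  ring

lemma qfact_succ (n : ℕ) : qfact (n + 1) = qfact n * qint (n + 1) :=
  prod_range_succ _ n

lemma qfact_ne_zero (n : ℕ) : qfact n ≠ 0 :=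
  prod_ne_zero_iff.2 fun i _ => mod_cast qint_natCast_ne_zero i.succ_ne_zero

lemma qbinom_natCast (a : ℤ) (n : ℕ) :
    qbinom a n = (∏ i ∈ range n, qint (a - i)) / qfact n := by
  simp [qbinom]

lemma qbinom_zero_right (a : ℤ) : qbinom a 0 = 1 := by
  simpa [qfact] using qbinom_natCast a 0

lemma qbinom_one_right (a : ℤ) : qbinom a 1 = qint a := by
  simpa [qfact, qint_one] using qbinom_natCast a 1

lemma qbinom_zero_left_natCast_succ (n : ℕ) : qbinom 0 ((n : ℤ) + 1) = 0 := by
  rw [← Nat.cast_succ, qbinom_natCast, prod_range_succ', Nat.cast_zero, sub_zero]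
  simp [qint]

lemma qbinom_succ_succ (a : ℤ) (b : ℕ) :
    qbinom (a + 1) ((b : ℤ) + 1) = q ^ ((b : ℤ) + 1) * qbinom a ((b : ℤ) + 1)
      + q ^ ((b : ℤ) - a) * qbinom a b := by
  have hsplit := qint_add (a - b) (b + 1)
  rw [show a - b + (b + 1) = a + 1 by ring, neg_sub] at hsplit
  have hb := qint_natCast_ne_zero b.succ_ne_zero
  have hfact := qfact_ne_zero b
  push_cast at hb
  rw [← Nat.cast_succ, qbinom_natCast, qbinom_natCast, qbinom_natCast, prod_range_succ',
    prod_range_succ, qfact_succ]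
  simp only [Nat.cast_succ, add_sub_add_right_eq_sub, Nat.cast_zero, sub_zero, hsplit]
  field_simp

def intLaurentSubring : Subring (RatFunc ℚ) where
  carrier := {f | IsIntLaurent f}
  zero_mem' := ⟨0, 0, by simp⟩
  one_mem' := ⟨1, 0, by simp⟩
  neg_mem' := by
    rintro _ ⟨p, k, rfl⟩
    exact ⟨-p, k, by simp⟩
  add_mem' := by
    rintro _ _ ⟨p, k, rfl⟩ ⟨p', k', rfl⟩
    refine ⟨p * Polynomial.X ^ k' + p' * Polynomial.X ^ k, k + k', ?_⟩
    simp only [map_add, map_mul, map_pow, Polynomial.aeval_X, Nat.cast_add, neg_add,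
      zpow_add₀ q_ne_zero, zpow_neg, zpow_natCast]
    field_simp [q_ne_zero]
  mul_mem' := by
    rintro _ _ ⟨p, k, rfl⟩ ⟨p', k', rfl⟩
    refine ⟨p * p', k + k', ?_⟩
    rw [map_mul, Nat.cast_add, neg_add, zpow_add₀ q_ne_zero]
    ring

lemma mem_intLaurentSubring {f : RatFunc ℚ} : f ∈ intLaurentSubring ↔ IsIntLaurent f := Iff.rfl

lemma zpow_mem_intLaurentSubring (k : ℤ) : q ^ k ∈ intLaurentSubring := by
  obtain ⟨n, rfl | rfl⟩ := k.eq_nat_or_neg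
  · exact ⟨Polynomial.X ^ n, 0, by simp [zpow_natCast]⟩
  · exact ⟨1, n, by simp⟩

lemma zpow_mul_mem_intLaurentSubring_iff (k : ℤ) {f : RatFunc ℚ} :
    q ^ k * f ∈ intLaurentSubring ↔ f ∈ intLaurentSubring := by
  refine ⟨fun h => ?_, mul_mem (zpow_mem_intLaurentSubring k)⟩
  have := mul_mem (zpow_mem_intLaurentSubring (-k)) h
  rwa [← mul_assoc, ← zpow_add₀ q_ne_zero, neg_add_cancel, zpow_zero, one_mul] at this

lemma qbinom_natCast_mem_intLaurentSubring (n : ℕ) (a : ℤ) :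
    qbinom a n ∈ intLaurentSubring := by
  induction n generalizing a with
  | zero => exact (qbinom_zero_right a).symm ▸ one_mem intLaurentSubring
  | succ n ih =>
    have step (a : ℤ) : qbinom (a + 1) (n + 1) ∈ intLaurentSubring ↔
        qbinom a (n + 1) ∈ intLaurentSubring := by
      rw [qbinom_succ_succ, add_mem_cancel_right
        (mul_mem (zpow_mem_intLaurentSubring _) (ih a)), zpow_mul_mem_intLaurentSubring_iff]
    push_cast
    induction a with
    | zero => simp [qbinom_zero_left_natCast_succ, zero_mem]
    | succ i hi => exact (step i).2 hi
    | pred i hi => exact (step _).1 (by rwa [sub_add_cancel])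

lemma qbinom_mem_intLaurentSubring (a b : ℤ) : qbinom a b ∈ intLaurentSubring := by
  rcases lt_or_ge b 0 with hb | hb
  · simp [qbinom, hb, zero_mem]
  · lift b to ℕ using hb
    exact qbinom_natCast_mem_intLaurentSubring b a

lemma prod_qint_add_div_qfact (d : ℤ) (K : ℕ) :
    (∏ j ∈ range K, qint (d + j)) / qfact K = qbinom (d + K - 1) K := by
  rw [qbinom_natCast, ← prod_range_reflect]
  congr 1
  refine prod_congr rfl fun j hj => ?_
  have := mem_range.1 hj
  congr 1
  omega

lemma qint_mul_prod_div_qfact_eq (c : ℤ) (N : ℕ) :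
    qint (2 * c + N - 1) * (∏ j ∈ range N, qint (2 * (c + j))) / qfact (N + 1) =
      (q ^ (c - 1) * qbinom (c + N) (N + 1) + q ^ (-(c + N)) * qbinom (c + N - 1) (N + 1)) *
        ∏ j ∈ range N, (q ^ (c + j) + q ^ (-(c + j))) := by
  have hup : qint (c + N) * ∏ j ∈ range N, qint (c + j) = ∏ j ∈ range (N + 1), qint (c + j) := by
    rw [prod_range_succ, mul_comm]
  have hdown : qint (c - 1) * ∏ j ∈ range N, qint (c + j) =
      ∏ j ∈ range (N + 1), qint (c - 1 + j) := by
    simp only [prod_range_succ', Nat.cast_add, Nat.cast_one, sub_add_add_cancel, Nat.cast_zero,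
      add_zero, mul_comm]
  have hbinom := prod_qint_add_div_qfact c (N + 1)
  have hbinom' := prod_qint_add_div_qfact (c - 1) (N + 1)
  rw [show c + (N + 1 : ℕ) - 1 = c + N by push_cast; ring, Nat.cast_succ] at hbinom
  rw [show c - 1 + (N + 1 : ℕ) - 1 = c + N - 1 by push_cast; ring, Nat.cast_succ] at hbinom'
  rw [show 2 * c + N - 1 = c + N + (c - 1) by ring, qint_add, ← hbinom, ← hbinom', ← hup, ← hdown,
    prod_congr rfl fun (j : ℕ) _ => qint_two_mul (c + j), prod_mul_distrib]
  ring

theorem qint_prod_div_qfact_isIntLaurent_general (m n : ℕ) (hmodd : Odd m) :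
    IsIntLaurent (qint ((m : ℤ) + n - 1) *
      (∏ j ∈ Finset.range (n - 1), qint ((m : ℤ) + 1 + 2 * (j : ℤ))) / qfact n) := by
  rw [← mem_intLaurentSubring]
  obtain ⟨t, rfl⟩ := hmodd
  rcases n with _ | N
  -- for `n = 0` the truncated `n - 1` empties the product, leaving `[m - 1]`
  · simpa [qfact, ← qbinom_one_right] using qbinom_mem_intLaurentSubring _ 1
  convert_to qint (2 * ((t : ℤ) + 1) + N - 1) * (∏ j ∈ range N, qint (2 * ((t : ℤ) + 1 + j))) /
      qfact (N + 1) ∈ intLaurentSubring using 2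
  · rw [Nat.add_sub_cancel]
    push_cast
    ring_nf
  rw [qint_mul_prod_div_qfact_eq]
  exact mul_mem (add_mem
      (mul_mem (zpow_mem_intLaurentSubring _) (qbinom_mem_intLaurentSubring _ _))
      (mul_mem (zpow_mem_intLaurentSubring _) (qbinom_mem_intLaurentSubring _ _)))
    (prod_mem fun j _ => add_mem (zpow_mem_intLaurentSubring _) (zpow_mem_intLaurentSubring _))

/-- For `m` odd and positive and `n ≥ 1`, the element
`[m+n-1]·([m+1][m+3]⋯[m+2n-3])/[n]!` is a Laurent polynomial with integer coefficients. -/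
theorem qint_prod_div_qfact_isIntLaurent (m n : ℕ) (hm : 1 ≤ m) (hmodd : Odd m) (hn : 1 ≤ n) :
    IsIntLaurent (qint ((m : ℤ) + n - 1) *
      (∏ j ∈ Finset.range (n - 1), qint ((m : ℤ) + 1 + 2 * (j : ℤ))) / qfact n) :=
  qint_prod_div_qfact_isIntLaurent_general m n hmodd
end

section
/- Fix ς = (ς₁, ς₂) ∈ ℤ². Let m, n, a, b, c be integers with a, c ≥ 0 and b ≥ a+c, and let x, θ ∈ ℕ with x ≤ a and θ ≤ c. Then: (i) if c ≥ 1, Ω^(a+1,b,c−1)_{m−1,n+1,x,θ,ς} = Ω^(a,b,c)_{m,n,x,θ,ς}; (ii) Ω^(a,b,c)_{m,n,x,c,ς} = Ω^(a+1,b+1,c)_{m,n+1,x,c,ς}; (iii) Ω^(a,b,c)_{m,n,x,θ,ς} = Ω^(x, b−a−c+θ+x, θ)_{m−c+θ, n−a+x, x, θ, ς}. -/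
open scoped BigOperators

/-- The product `[α][α+2]⋯[α+2k−2]` of `k` balanced quantum integers. -/
noncomputable def prodQint (α : ℤ) (k : ℕ) : RatFunc ℚ :=
  ∏ i ∈ Finset.range k, qint (α + 2 * (i : ℤ))

/-- `Ω^(a,b,c)_{m,n,x,θ,ς} = Σ_{k+y=θ} (−1)^k·([α][α+2]⋯[α+2k−2]/[k]!)·q^(ς₂(y−x))·
q^(−y(y+1+2n+2c−2b)/2 − x(x−1+2m+2b−4c−2a−2y+2k)/2)·qbinom(n−b+c+x, x)·qbinom(m−c+θ, y)`,
where `α = m − n + b − 2c + ς₂`. -/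
noncomputable def OmegaA (ς : ℤ × ℤ) (m n a b c : ℤ) (x θ : ℕ) : RatFunc ℚ :=
  ∑ k ∈ Finset.range (θ + 1),
    (fun y : ℤ =>
      (-1 : RatFunc ℚ) ^ k * (prodQint (m - n + b - 2 * c + ς.2) k / qfact k) *
        q ^ (ς.2 * (y - (x : ℤ))) *
        q ^ ((-(y * (y + 1 + 2 * n + 2 * c - 2 * b)) -
              (x : ℤ) * ((x : ℤ) - 1 + 2 * m + 2 * b - 4 * c - 2 * a - 2 * y + 2 * (k : ℤ))) / 2) *
        qbinom (n - b + c + (x : ℤ)) (x : ℤ) *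
        qbinom (m - c + (θ : ℤ)) y) ((θ - k : ℕ) : ℤ)

/-- Lemma 5.1 of the paper: the three recursions for `Ω^(a,b,c)_{m,n,x,θ,ς}`. -/
theorem OmegaA_recursions (ς : ℤ × ℤ) (m n b : ℤ) (a c : ℕ)
    (hb : (a : ℤ) + (c : ℤ) ≤ b) (x θ : ℕ) (hx : x ≤ a) (hθ : θ ≤ c) :
    (1 ≤ c →
      OmegaA ς (m - 1) (n + 1) ((a : ℤ) + 1) b ((c : ℤ) - 1) x θ =
        OmegaA ς m n (a : ℤ) b (c : ℤ) x θ) ∧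
    OmegaA ς m n (a : ℤ) b (c : ℤ) x c =
      OmegaA ς m (n + 1) ((a : ℤ) + 1) (b + 1) (c : ℤ) x c ∧
    OmegaA ς m n (a : ℤ) b (c : ℤ) x θ =
      OmegaA ς (m - (c : ℤ) + (θ : ℤ)) (n - (a : ℤ) + (x : ℤ)) (x : ℤ)
        (b - (a : ℤ) - (c : ℤ) + (θ : ℤ) + (x : ℤ)) (θ : ℤ) x θ := by
  refine ⟨fun _ => ?_, ?_, ?_⟩ <;>
  · unfold OmegaA
    refine Finset.sum_congr rfl fun k _ => ?_
    simp only []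
    ring_nf
end

section
/- Let ς = (ς₁, ς₂) ∈ {(1,0), (0,1)} and set ς' := (1−ς₁, 1−ς₂). Let m, n, a, b, c be natural numbers with b ≥ a+c, and let θ, y ∈ ℕ with θ ≤ a and y ≤ c. Then: (i) if a ≥ 1, O^(a−1,b,c+1)_{m+1,n−1,θ,y,ς} = O^(a,b,c)_{m,n,θ,y,ς}; (ii) O^(a,b,c)_{m,n,a,y,ς} = O^(a,b+1,c+1)_{m+1,n,a,y,ς}; (iii) O^(a,b,c)_{m,n,θ,y,ς} = O^(θ, b−a−c+θ+y, y)_{m−c+y, n−a+θ, θ, y, ς}; (iv) qbinom(m+b−a−c, c)·O^{a,b,c}_{m,n,ς} = qbinom(m, c)·Ω^(c,a+c,a)_{n−b+c+a, m+b−a−c, c, a, ς'}. -/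
open scoped BigOperators

/-- `O^(a,b,c)_{m,n,θ,y,ς} = Σ_{x+k=θ} (−1)^k·([β][β+2]⋯[β+2k−2]/[k]!)·q^(ς₁(x−y))·
q^(−y(y−1+2n+2c−2b+2k)/2 − x(x+1+2m+2b−4c−2a−2y)/2)·qbinom(n−b+c+θ, x)·qbinom(m−c+y, y)`,
where `β = n − m + a − 2b + 3c + ς₁`. -/
noncomputable def OA (ς : ℤ × ℤ) (m n a b c : ℤ) (θ y : ℕ) : RatFunc ℚ :=
  ∑ k ∈ Finset.range (θ + 1),
    (fun x : ℤ =>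
      (-1 : RatFunc ℚ) ^ k * (prodQint (n - m + a - 2 * b + 3 * c + ς.1) k / qfact k) *
        q ^ (ς.1 * (x - (y : ℤ))) *
        q ^ ((-((y : ℤ) * ((y : ℤ) - 1 + 2 * n + 2 * c - 2 * b + 2 * (k : ℤ))) -
              x * (x + 1 + 2 * m + 2 * b - 4 * c - 2 * a - 2 * (y : ℤ))) / 2) *
        qbinom (n - b + c + (θ : ℤ)) x *
        qbinom (m - c + (y : ℤ)) (y : ℤ)) ((θ - k : ℕ) : ℤ)

/-- Lemma 5.11 of the paper: the recursions for `O^(a,b,c)_{m,n,θ,y,ς}` and the relation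
`qbinom(m+b−a−c,c)·O^{a,b,c}_{m,n,ς} = qbinom(m,c)·Ω^(c,a+c,a)_{n−b+c+a, m+b−a−c, c, a, ς'}`
with `ς' = (1−ς₁, 1−ς₂)`. -/
theorem OA_recursions (ς : ℤ × ℤ) (hς : ς = (1, 0) ∨ ς = (0, 1)) (m n a b c : ℕ)
    (hb : a + c ≤ b) (θ y : ℕ) (hθ : θ ≤ a) (hy : y ≤ c) :
    (1 ≤ a →
      OA ς ((m : ℤ) + 1) ((n : ℤ) - 1) ((a : ℤ) - 1) (b : ℤ) ((c : ℤ) + 1) θ y =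
        OA ς (m : ℤ) (n : ℤ) (a : ℤ) (b : ℤ) (c : ℤ) θ y) ∧
    OA ς (m : ℤ) (n : ℤ) (a : ℤ) (b : ℤ) (c : ℤ) a y =
      OA ς ((m : ℤ) + 1) (n : ℤ) (a : ℤ) ((b : ℤ) + 1) ((c : ℤ) + 1) a y ∧
    OA ς (m : ℤ) (n : ℤ) (a : ℤ) (b : ℤ) (c : ℤ) θ y =
      OA ς ((m : ℤ) - (c : ℤ) + (y : ℤ)) ((n : ℤ) - (a : ℤ) + (θ : ℤ)) (θ : ℤ)
        ((b : ℤ) - (a : ℤ) - (c : ℤ) + (θ : ℤ) + (y : ℤ)) (y : ℤ) θ y ∧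
    qbinom ((m : ℤ) + (b : ℤ) - (a : ℤ) - (c : ℤ)) (c : ℤ) *
        OA ς (m : ℤ) (n : ℤ) (a : ℤ) (b : ℤ) (c : ℤ) a c =
      qbinom (m : ℤ) (c : ℤ) *
        OmegaA (1 - ς.1, 1 - ς.2) ((n : ℤ) - (b : ℤ) + (c : ℤ) + (a : ℤ))
          ((m : ℤ) + (b : ℤ) - (a : ℤ) - (c : ℤ)) (c : ℤ) ((a : ℤ) + (c : ℤ)) (a : ℤ) c a := by

  have hsig : ς.1 = 1 - ς.2 := by rcases hς with h | h <;> subst h <;> rfl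
  refine ⟨fun _ => ?_, ?_, ?_, ?_⟩
  · unfold OA
    refine Finset.sum_congr rfl fun k hk => ?_
    ring_nf
  · unfold OA
    refine Finset.sum_congr rfl fun k hk => ?_
    ring_nf
  · unfold OA
    refine Finset.sum_congr rfl fun k hk => ?_
    ring_nf
  · unfold OA OmegaA
    rw [Finset.mul_sum, Finset.mul_sum]
    refine Finset.sum_congr rfl fun k hk => ?_
    simp only [hsig]
    ring_nf
end
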